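/- (Strengthened lower bound for powers of sinh at the inverse volume function.) Let n ≥ 2 be an integer and let q ≥ 2n/(n−1). Then for every r ≥ 0, setting t = n σ_n ∫_0^r sinh(s)^{n−1} ds, one has sinh(r)^{q(n−1)} ≥ (t/σ_n)^{q(n−1)/n} + ((n−1)/n)^q (t/σ_n)^q. Equivalently, sinh(F(t))^{q(n−1)} ≥ (t/σ_n)^{q(n−1)/n} + ((n−1)/n)^q (t/σ_n)^q for all t ≥ 0. -/

import Mathlib

open MeasureTheory Real Set Filter
open scoped ENNReal NNReal BigOperators RealInnerProductSpace

noncomputable section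

/-- Decreasing rearrangement of `u` with respect to the measure `μ`:
`u*(t) = inf {s > 0 : μ({|u| > s}) ≤ t}`. -/
def rearr {α : Type*} [MeasurableSpace α] (μ : Measure α) (u : α → ℝ) (t : ℝ) : ℝ :=
  sInf {s : ℝ | 0 < s ∧ μ {x | s < |u x|} ≤ ENNReal.ofReal t}

/-- Lorentz quasinorm `‖u‖_{p,q} = (∫_0^∞ (t^{1/p} u*(t))^q dt/t)^{1/q}`. -/
def lorentzNorm {α : Type*} [MeasurableSpace α] (μ : Measure α) (p q : ℝ) (u : α → ℝ) : ℝ :=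
  (∫ t in Ioi (0:ℝ), (t ^ (1/p) * rearr μ u t) ^ q / t) ^ (1/q)

/-- Hyperbolic volume measure `dV_g = (2/(1-|x|²))ⁿ dx` on the Poincaré ball model. -/
def hypVolume (n : ℕ) : Measure (EuclideanSpace ℝ (Fin n)) :=
  ((volume : Measure (EuclideanSpace ℝ (Fin n))).restrict
      (Metric.ball (0 : EuclideanSpace ℝ (Fin n)) 1)).withDensity
    (fun x => ENNReal.ofReal ((2 / (1 - ‖x‖ ^ 2)) ^ n))

/-- Euclidean Laplacian `Δu = ∑ᵢ ∂²u/∂xᵢ²`. -/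
def eLap {n : ℕ} (u : EuclideanSpace ℝ (Fin n) → ℝ) (x : EuclideanSpace ℝ (Fin n)) : ℝ :=
  ∑ i : Fin n, fderiv ℝ (fun y => fderiv ℝ u y (EuclideanSpace.single i 1)) x
    (EuclideanSpace.single i 1)

/-- Hyperbolic Laplace–Beltrami operator on the Poincaré ball:
`Δ_g u(x) = ((1-|x|²)/2)² Δu(x) + (n-2)((1-|x|²)/2)⟨x, ∇u(x)⟩`. -/
def hypLap {n : ℕ} (u : EuclideanSpace ℝ (Fin n) → ℝ) : EuclideanSpace ℝ (Fin n) → ℝ :=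
  fun x => ((1 - ‖x‖ ^ 2) / 2) ^ 2 * eLap u x
    + ((n : ℝ) - 2) * ((1 - ‖x‖ ^ 2) / 2) * ⟪x, gradient u x⟫

/-- Length of the hyperbolic gradient: `|∇_g u|(x) = ((1-|x|²)/2)|∇u(x)|`. -/
def hypGradLen {n : ℕ} (u : EuclideanSpace ℝ (Fin n) → ℝ) (x : EuclideanSpace ℝ (Fin n)) : ℝ :=
  ((1 - ‖x‖ ^ 2) / 2) * ‖gradient u x‖

/-- Smooth functions compactly supported in the open unit ball. -/
def IsTestFun {n : ℕ} (u : EuclideanSpace ℝ (Fin n) → ℝ) : Prop :=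
  ContDiff ℝ (⊤ : ℕ∞) u ∧ HasCompactSupport u ∧
    tsupport u ⊆ Metric.ball (0 : EuclideanSpace ℝ (Fin n)) 1

/-- Volume `σ_θ = π^{θ/2}/Γ(θ/2+1)` of the unit ball in "dimension" `θ`. -/
def sigmaVol (θ : ℝ) : ℝ := Real.pi ^ (θ / 2) / Real.Gamma (θ / 2 + 1)

/-- `j_{a,q} = min{j ∈ ℕ : j > 1 + a(q-1)/q}`. -/
def jexp (a q : ℝ) : ℕ := sInf {j : ℕ | 1 + a * (q - 1) / q < (j : ℝ)}

/-- Truncated exponential `Φ_{a,q}(t) = e^t - ∑_{j=0}^{j_{a,q}-2} t^j/j!`. -/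
def PhiAQ (a q t : ℝ) : ℝ :=
  Real.exp t - ∑ j ∈ Finset.range (jexp a q - 1), t ^ j / (Nat.factorial j : ℝ)

/-- Sharp Adams constant `β_{n,m}` for `m` even. -/
def betaEven (n m : ℕ) : ℝ :=
  Real.pi ^ ((n : ℝ) / 2) * 2 ^ (m : ℝ) * Real.Gamma ((m : ℝ) / 2) /
    (sigmaVol n ^ (((n : ℝ) - m) / n) * Real.Gamma (((n : ℝ) - m) / 2))

/-- Sharp Adams constant `β_{n,m}` for `m` odd. -/
def betaOdd (n m : ℕ) : ℝ :=
  Real.pi ^ ((n : ℝ) / 2) * 2 ^ (m : ℝ) * Real.Gamma (((m : ℝ) + 1) / 2) /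
    (sigmaVol n ^ (((n : ℝ) - m) / n) * Real.Gamma (((n : ℝ) - m + 1) / 2))

/-- Sharp Lorentz–Poincaré constant `C(n,m,p) = ((n-1)²/(p p'))^{m/2}` for `m = 2k` even. -/
def pconstEven (n k : ℕ) (p : ℝ) : ℝ := (((n : ℝ) - 1) ^ 2 / (p * (p / (p - 1)))) ^ k

/-- Sharp Lorentz–Poincaré constant `C(n,m,p) = ((n-1)/p)((n-1)²/(p p'))^{(m-1)/2}`
for `m = 2k+1` odd. -/
def pconstOdd (n k : ℕ) (p : ℝ) : ℝ :=
  (((n : ℝ) - 1) / p) * ((((n : ℝ) - 1) ^ 2 / (p * (p / (p - 1)))) ^ k)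

/-- The measure `λ_θ` on `(0,∞)` with density `θ σ_θ x^{θ-1}`. -/
def lamMeasure (θ : ℝ) : Measure ℝ :=
  (volume.restrict (Ioi (0:ℝ))).withDensity
    (fun x => ENNReal.ofReal (θ * sigmaVol θ * x ^ (θ - 1)))

/-- `μ_{q,1} = (q σ_q)^{1/(q-1)}`. -/
def muQ1 (q : ℝ) : ℝ := (q * sigmaVol q) ^ (1 / (q - 1))

/-!
With `V(r) = n ∫₀^r sinh^{n-1}` and `c = (n-1)/n`, three inequalities hold on `r ≥ 0`, each
because both sides vanish at `0` and the derivatives compare by the previous one: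
`c V ≤ sinh^{n-1}`, then `V + (c V)^{(n+1)/(n-1)} ≤ sinh^n cosh` (using `cosh² = sinh² + 1`),
then `V² + (c V)^{2n/(n-1)} ≤ sinh^{2n}`. Raising the last one to the power
`θ = q(n-1)/(2n) ≥ 1` and using `a^θ + b^θ ≤ (a + b)^θ` gives the claim, since `t / σ_n = V(r)`.
-/

lemma le_of_hasDerivAt_le {f g f' g' : ℝ → ℝ} (hf : ∀ x, HasDerivAt f (f' x) x)
    (hg : ∀ x, HasDerivAt g (g' x) x) (h0 : f 0 ≤ g 0) (h' : ∀ x, 0 < x → f' x ≤ g' x)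
    {r : ℝ} (hr : 0 ≤ r) : f r ≤ g r := by
  have hmono : MonotoneOn (fun x => g x - f x) (Ici 0) := by
    refine monotoneOn_of_hasDerivWithinAt_nonneg (f' := fun x => g' x - f' x) (convex_Ici 0)
      (fun x _ => ((hg x).sub (hf x)).continuousAt.continuousWithinAt)
      (fun x _ => ((hg x).sub (hf x)).hasDerivWithinAt) ?_
    rw [interior_Ici]
    exact fun x hx => sub_nonneg.2 (h' x hx)
  linarith [hmono self_mem_Ici hr hr]

lemma sigmaVol_pos {θ : ℝ} (hθ : -2 < θ) : 0 < sigmaVol θ :=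
  div_pos (rpow_pos_of_pos pi_pos _) (Gamma_pos_of_pos (by linarith))

/-- `sinhVolume m r = t / σ_n` for `n = m + 1`: the volume of a hyperbolic `r`-ball in `ℍⁿ`,
in units of `σ_n`. -/
def sinhVolume (m : ℕ) (r : ℝ) : ℝ := (m + 1) * ∫ s in (0:ℝ)..r, sinh s ^ m

section sinhVolume

variable {m : ℕ}

@[simp] lemma sinhVolume_zero : sinhVolume m 0 = 0 := by simp [sinhVolume]

lemma hasDerivAt_sinhVolume (m : ℕ) (r : ℝ) :
    HasDerivAt (sinhVolume m) ((m + 1) * sinh r ^ m) r :=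
  ((continuous_sinh.pow m).integral_hasStrictDerivAt 0 r).hasDerivAt.const_mul _

lemma sinhVolume_nonneg {r : ℝ} (hr : 0 ≤ r) : 0 ≤ sinhVolume m r :=
  mul_nonneg (by positivity) <| intervalIntegral.integral_nonneg hr
    fun s hs => pow_nonneg (sinh_nonneg_iff.2 hs.1) _

lemma hasDerivAt_mul_sinhVolume_rpow (c : ℝ) {p : ℝ} (hp : 1 ≤ p) (r : ℝ) :
    HasDerivAt (fun y => (c * sinhVolume m y) ^ p)
      (c * ((m + 1) * sinh r ^ m) * p * (c * sinhVolume m r) ^ (p - 1)) r :=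
  ((hasDerivAt_sinhVolume m r).const_mul c).rpow_const (Or.inr hp)

lemma mul_sinhVolume_le_sinh_pow {r : ℝ} (hr : 0 ≤ r) :
    m / (m + 1) * sinhVolume m r ≤ sinh r ^ m := by
  refine le_of_hasDerivAt_le (fun x => (hasDerivAt_sinhVolume m x).const_mul _)
    (fun x => (hasDerivAt_sinh x).fun_pow m) (by simp) (fun x hx => ?_) hr
  have hs : 0 < sinh x := sinh_pos_iff.2 hx
  rcases m with _ | k
  · simp
  · calc ((k + 1 : ℕ) : ℝ) / ((k + 1 : ℕ) + 1) * (((k + 1 : ℕ) + 1) * sinh x ^ (k + 1))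
        = (k + 1 : ℕ) * sinh x ^ k * sinh x := by field_simp; ring
      _ ≤ (k + 1 : ℕ) * sinh x ^ (k + 1 - 1) * cosh x := by
        rw [Nat.add_sub_cancel]
        gcongr
        exact (sinh_lt_cosh x).le

lemma mul_sinhVolume_rpow_le_sinh_sq (hm : 0 < m) {r : ℝ} (hr : 0 ≤ r) :
    (m / (m + 1) * sinhVolume m r) ^ (2 / m : ℝ) ≤ sinh r ^ 2 := by
  have hs : 0 ≤ sinh r := sinh_nonneg_iff.2 hr
  calc (m / (m + 1) * sinhVolume m r) ^ (2 / m : ℝ) ≤ (sinh r ^ m) ^ (2 / m : ℝ) :=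
        rpow_le_rpow (by have := sinhVolume_nonneg (m := m) hr; positivity)
          (mul_sinhVolume_le_sinh_pow hr) (by positivity)
    _ = sinh r ^ 2 := by
        rw [← rpow_natCast, ← rpow_mul hs]
        field_simp
        norm_cast

lemma sinhVolume_add_rpow_le_sinh_pow_mul_cosh (hm : 0 < m) {r : ℝ} (hr : 0 ≤ r) :
    sinhVolume m r + (m / (m + 1) * sinhVolume m r) ^ ((m + 2) / m : ℝ)
      ≤ sinh r ^ (m + 1) * cosh r := by
  have hm' : (0 : ℝ) < m := Nat.cast_pos.2 hm
  have hp : (1 : ℝ) ≤ (m + 2) / m := by rw [le_div_iff₀ hm']; linarith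
  refine le_of_hasDerivAt_le
    (fun x => (hasDerivAt_sinhVolume m x).add (hasDerivAt_mul_sinhVolume_rpow _ hp x))
    (fun x => ((hasDerivAt_sinh x).fun_pow (m + 1)).mul (hasDerivAt_cosh x))
    (by simp [zero_rpow (by positivity : ((m + 2) / m : ℝ) ≠ 0)]) (fun x hx => ?_) hr
  have hs : 0 ≤ sinh x ^ m := pow_nonneg (sinh_pos_iff.2 hx).le m
  have hcoef : (m / (m + 1) * (m + 1) * ((m + 2) / m) : ℝ) = m + 2 := by field_simp
  have hexp : ((m + 2) / m - 1 : ℝ) = 2 / m := by field_simp; ring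
  have hW := mul_le_mul_of_nonneg_left (mul_sinhVolume_rpow_le_sinh_sq hm hx.le) hs
  rw [hexp, Nat.add_sub_cancel, pow_succ]
  push_cast
  linear_combination (m + 2 : ℝ) * hW - ((m + 1) * sinh x ^ m) * cosh_sq x
    + (sinh x ^ m * (m / (m + 1) * sinhVolume m x) ^ (2 / m : ℝ)) * hcoef

lemma sinhVolume_sq_add_rpow_le_sinh_pow (hm : 0 < m) {r : ℝ} (hr : 0 ≤ r) :
    sinhVolume m r ^ 2 + (m / (m + 1) * sinhVolume m r) ^ (2 * (m + 1) / m : ℝ)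
      ≤ sinh r ^ (2 * m + 2) := by
  have hm' : (0 : ℝ) < m := Nat.cast_pos.2 hm
  have hp : (1 : ℝ) ≤ 2 * (m + 1) / m := by rw [le_div_iff₀ hm']; linarith
  refine le_of_hasDerivAt_le
    (fun x => ((hasDerivAt_sinhVolume m x).fun_pow 2).add (hasDerivAt_mul_sinhVolume_rpow _ hp x))
    (fun x => (hasDerivAt_sinh x).fun_pow (2 * m + 2))
    (by simp [zero_rpow (by positivity : (2 * (m + 1) / m : ℝ) ≠ 0)]) (fun x hx => ?_) hr
  have hs : 0 ≤ sinh x ^ m := pow_nonneg (sinh_pos_iff.2 hx).le m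
  have hcoef : (m / (m + 1) * (m + 1) * (2 * (m + 1) / m) : ℝ) = 2 * (m + 1) := by field_simp
  have hexp : (2 * (m + 1) / m - 1 : ℝ) = (m + 2) / m := by field_simp; ring
  have hB := mul_le_mul_of_nonneg_left (sinhVolume_add_rpow_le_sinh_pow_mul_cosh hm hx.le) hs
  rw [hexp, show 2 * m + 2 - 1 = m + (m + 1) by omega, pow_add]
  push_cast
  linear_combination (2 * (m + 1) : ℝ) * hB
    + (sinh x ^ m * (m / (m + 1) * sinhVolume m x) ^ ((m + 2) / m : ℝ)) * hcoef

lemma sinhVolume_rpow_add_le_sinh_rpow (hm : 0 < m) {q : ℝ} (hq : 2 * (m + 1) / m ≤ q)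
    {r : ℝ} (hr : 0 ≤ r) :
    sinhVolume m r ^ (q * m / (m + 1)) + (m / (m + 1)) ^ q * sinhVolume m r ^ q
      ≤ sinh r ^ (q * m) := by
  have hm' : (0 : ℝ) < m := Nat.cast_pos.2 hm
  have hθ : 1 ≤ q * m / (2 * (m + 1)) := by
    rw [le_div_iff₀ (by positivity), one_mul]
    rwa [div_le_iff₀ hm'] at hq
  have hV : 0 ≤ sinhVolume m r := sinhVolume_nonneg hr
  have hcV : 0 ≤ m / (m + 1) * sinhVolume m r := by positivity
  have hs : 0 ≤ sinh r := sinh_nonneg_iff.2 hr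
  calc sinhVolume m r ^ (q * m / (m + 1)) + (m / (m + 1)) ^ q * sinhVolume m r ^ q
      = (sinhVolume m r ^ 2) ^ (q * m / (2 * (m + 1)))
        + ((m / (m + 1) * sinhVolume m r) ^ (2 * (m + 1) / m : ℝ)) ^ (q * m / (2 * (m + 1))) := by
        rw [← rpow_natCast, ← rpow_mul hV, ← rpow_mul hcV, mul_rpow (by positivity) hV]
        congr 2 <;> push_cast <;> field_simp
    _ ≤ (sinhVolume m r ^ 2 + (m / (m + 1) * sinhVolume m r) ^ (2 * (m + 1) / m : ℝ))
          ^ (q * m / (2 * (m + 1))) :=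
        add_rpow_le_rpow_add (by positivity) (rpow_nonneg hcV _) hθ
    _ ≤ (sinh r ^ (2 * m + 2)) ^ (q * m / (2 * (m + 1))) :=
        rpow_le_rpow (by positivity) (sinhVolume_sq_add_rpow_le_sinh_pow hm hr) (by positivity)
    _ = sinh r ^ (q * m) := by
        rw [← rpow_natCast, ← rpow_mul hs]
        congr 1
        push_cast
        field_simp

end sinhVolume

/-- Strengthened lower bound for powers of sinh at the inverse volume function. -/
theorem sinh_pow_strengthened (n : ℕ) (hn : 2 ≤ n) (q : ℝ)
    (hq : 2 * (n : ℝ) / ((n : ℝ) - 1) ≤ q) :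
    ∀ r : ℝ, 0 ≤ r → ∀ t : ℝ,
      t = (n : ℝ) * sigmaVol n * ∫ s in (0:ℝ)..r, Real.sinh s ^ (n - 1) →
      (t / sigmaVol n) ^ (q * ((n : ℝ) - 1) / n)
          + (((n : ℝ) - 1) / n) ^ q * (t / sigmaVol n) ^ q
        ≤ Real.sinh r ^ (q * ((n : ℝ) - 1)) := by
  intro r hr t ht
  obtain ⟨m, rfl⟩ : ∃ m, n = m + 1 := ⟨n - 1, by omega⟩
  have hσ : 0 < sigmaVol ((m + 1 : ℕ) : ℝ) :=
    sigmaVol_pos (by linarith [(m + 1 : ℕ).cast_nonneg (α := ℝ)])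
  have hvol : t / sigmaVol ((m + 1 : ℕ) : ℝ) = sinhVolume m r := by
    rw [ht, sinhVolume, Nat.add_sub_cancel]
    field_simp
    push_cast
    ring
  rw [hvol]
  push_cast at hq ⊢
  rw [add_sub_cancel_right] at hq ⊢
  exact sinhVolume_rpow_add_le_sinh_rpow (by omega) hq hr
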